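/- arXiv:2505.14061 — 5 statements merged into one kernel-verified Lean document; each statement's English description precedes it below -/
import Mathlib

section
/- Let V ≤ 𝔽₂^u be a proper subspace, S ⊆ 𝔽₂^u, b ≥ 0, and for a subspace W define Φ(W) := E_{x uniform in 𝔽₂^u}[b^{|(x+W)∩S|}]. If v is sampled uniformly from 𝔽₂^u \ V and W_v := span(V ∪ {v}), then E_v[Φ(W_v)] ≤ Φ(V)². -/
/-- The potential function Φ(W) = E_{x uniform in 𝔽₂^u}[b^{|(x+W)∩S|}]. -/
noncomputable def potential (u : ℕ) (S : Set (Fin u → ZMod 2)) (b : ℝ)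
    (W : Submodule (ZMod 2) (Fin u → ZMod 2)) : ℝ :=
  (∑ x : Fin u → ZMod 2, b ^ (({z | z - x ∈ W} ∩ S).ncard)) / 2 ^ u

open Classical in
theorem stmt_4 (u : ℕ) (V : Submodule (ZMod 2) (Fin u → ZMod 2)) (hV : V ≠ ⊤)
    (S : Set (Fin u → ZMod 2)) (b : ℝ) (hb : 0 ≤ b) :
    (∑ v ∈ Finset.univ.filter (fun v : Fin u → ZMod 2 => v ∉ V),
        potential u S b (Submodule.span (ZMod 2) ((V : Set (Fin u → ZMod 2)) ∪ {v})))
      / ((Finset.univ.filter (fun v : Fin u → ZMod 2 => v ∉ V)).card : ℝ)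
    ≤ (potential u S b V) ^ 2 := by
  classical
  set f : (Fin u → ZMod 2) → ℝ := fun x => b ^ (({z | z - x ∈ V} ∩ S).ncard) with hf
  set T : ℝ := ∑ x : Fin u → ZMod 2, f x with hT
  set Q : ℝ := ∑ x : Fin u → ZMod 2, f x * f x with hQ
  set N : ℝ := (2:ℝ) ^ u with hN
  have hNpos : (0:ℝ) < N := by positivity
  have hQ0 : 0 ≤ Q := Finset.sum_nonneg fun x _ => mul_self_nonneg _
  have hPV : potential u S b V = T / N := rfl
  -- Step A: split of the coset for v ∉ V
  have hstepA : ∀ v : Fin u → ZMod 2, v ∉ V →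
      potential u S b (Submodule.span (ZMod 2) ((V : Set (Fin u → ZMod 2)) ∪ {v}))
        = (∑ x : Fin u → ZMod 2, f x * f (x + v)) / N := by
    intro v hv
    unfold potential
    congr 1
    refine Finset.sum_congr rfl fun x _ => ?_
    have hsplit : {z : Fin u → ZMod 2 |
          z - x ∈ Submodule.span (ZMod 2) ((V : Set (Fin u → ZMod 2)) ∪ {v})}
        = {z : Fin u → ZMod 2 | z - x ∈ V} ∪ {z : Fin u → ZMod 2 | z - (x + v) ∈ V} := by
      ext z
      simp only [Set.mem_setOf_eq, Set.mem_union]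
      rw [Submodule.span_union, Submodule.span_eq, Submodule.mem_sup]
      constructor
      · rintro ⟨a, ha, c, hc, h⟩
        rw [Submodule.mem_span_singleton] at hc
        obtain ⟨r, rfl⟩ := hc
        rcases (by decide : ∀ r : ZMod 2, r = 0 ∨ r = 1) r with h0 | h1
        · left
          subst h0
          rw [zero_smul, add_zero] at h
          rw [← h]; exact ha
        · right
          subst h1
          rw [one_smul] at h
          have e : z - (x + v) = z - x - v := by abel
          rw [e, ← h]
          have e2 : a + v - v = a := by abel
          rw [e2]; exact ha
      · rintro (h | h)
        · exact ⟨z - x, h, 0, Submodule.zero_mem _, add_zero _⟩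
        · refine ⟨z - (x + v), h, v, Submodule.mem_span_singleton_self v, ?_⟩
          abel
    have hdisj : Disjoint ({z : Fin u → ZMod 2 | z - x ∈ V} ∩ S)
        ({z : Fin u → ZMod 2 | z - (x + v) ∈ V} ∩ S) := by
      rw [Set.disjoint_left]
      rintro z ⟨h1, _⟩ ⟨h2, _⟩
      have hsub : (z - x) - (z - (x + v)) = v := by abel
      exact hv (hsub ▸ V.sub_mem h1 h2)
    rw [hsplit, Set.union_inter_distrib_right,
      Set.ncard_union_eq hdisj (Set.toFinite _) (Set.toFinite _), pow_add]
  -- Step B: translation invariance for v ∈ V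
  have hstepB : ∀ v ∈ V, ∀ x : Fin u → ZMod 2, f (x + v) = f x := by
    intro v hv x
    have hset : {z : Fin u → ZMod 2 | z - (x + v) ∈ V}
        = {z : Fin u → ZMod 2 | z - x ∈ V} := by
      ext z
      simp only [Set.mem_setOf_eq]
      constructor
      · intro h
        have e : z - (x + v) + v = z - x := by abel
        rw [← e]; exact V.add_mem h hv
      · intro h
        have e : (z - x) - v = z - (x + v) := by abel
        rw [← e]; exact V.sub_mem h hv
    simp only [hf, hset]
  -- Total sum identity
  have htot : ∑ v : Fin u → ZMod 2, ∑ x : Fin u → ZMod 2, f x * f (x + v) = T * T := by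
    rw [Finset.sum_comm]
    calc ∑ x : Fin u → ZMod 2, ∑ v : Fin u → ZMod 2, f x * f (x + v)
        = ∑ x : Fin u → ZMod 2, f x * ∑ v : Fin u → ZMod 2, f (x + v) := by
          simp [Finset.mul_sum]
      _ = ∑ x : Fin u → ZMod 2, f x * T := by
          refine Finset.sum_congr rfl fun x _ => ?_
          congr 1
          exact Fintype.sum_equiv (Equiv.addLeft x) _ _ fun v => rfl
      _ = T * T := by rw [← Finset.sum_mul]
  set k := (Finset.univ.filter (fun v : Fin u → ZMod 2 => v ∈ V)).card with hk
  set m := (Finset.univ.filter (fun v : Fin u → ZMod 2 => v ∉ V)).card with hm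
  have hsumV : ∑ v ∈ Finset.univ.filter (fun v : Fin u → ZMod 2 => v ∈ V),
      ∑ x : Fin u → ZMod 2, f x * f (x + v) = (k : ℝ) * Q := by
    have h1 : ∀ v ∈ Finset.univ.filter (fun v : Fin u → ZMod 2 => v ∈ V),
        (∑ x : Fin u → ZMod 2, f x * f (x + v)) = Q := by
      intro v hv
      simp only [Finset.mem_filter] at hv
      exact Finset.sum_congr rfl fun x _ => by rw [hstepB v hv.2 x]
    rw [Finset.sum_congr rfl h1, Finset.sum_const, nsmul_eq_mul]
  set P : ℝ := ∑ v ∈ Finset.univ.filter (fun v : Fin u → ZMod 2 => v ∉ V),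
      ∑ x : Fin u → ZMod 2, f x * f (x + v) with hP
  have hsplitsum : (k : ℝ) * Q + P = T * T := by
    rw [← hsumV, ← htot, hP]
    exact_mod_cast Finset.sum_filter_add_sum_filter_not Finset.univ
      (fun v : Fin u → ZMod 2 => v ∈ V) (fun v => ∑ x : Fin u → ZMod 2, f x * f (x + v))
  have hcardα : ((Fintype.card (Fin u → ZMod 2) : ℕ) : ℝ) = N := by
    have : Fintype.card (Fin u → ZMod 2) = 2 ^ u := by simp
    rw [this, hN]; push_cast; ring
  have hcards : (k : ℝ) + (m : ℝ) = N := by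
    rw [← hcardα, ← Finset.card_univ (α := Fin u → ZMod 2)]
    exact_mod_cast Finset.card_filter_add_card_filter_not
      (s := (Finset.univ : Finset (Fin u → ZMod 2))) (p := fun v => v ∈ V)
  have hmpos : 0 < m := by
    obtain ⟨v, hv⟩ : ∃ v : Fin u → ZMod 2, v ∉ V := by
      by_contra h
      push_neg at h
      exact hV (Submodule.eq_top_iff'.mpr h)
    exact Finset.card_pos.mpr ⟨v, Finset.mem_filter.mpr ⟨Finset.mem_univ _, hv⟩⟩
  have hCS : T ^ 2 ≤ N * Q := by
    have h := sq_sum_le_card_mul_sum_sq (s := (Finset.univ : Finset (Fin u → ZMod 2))) (f := f)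
    rw [Finset.card_univ] at h
    calc T ^ 2 ≤ ((Fintype.card (Fin u → ZMod 2) : ℕ) : ℝ) * ∑ x : Fin u → ZMod 2, f x ^ 2 := h
      _ = N * Q := by
          rw [hcardα]; congr 1
          exact Finset.sum_congr rfl fun x _ => sq (f x)
  -- Rewrite the goal
  rw [Finset.sum_congr rfl (fun v hv => hstepA v (Finset.mem_filter.mp hv).2),
    ← Finset.sum_div, hPV, div_pow, div_div,
    div_le_div_iff₀ (by positivity) (by positivity)]
  rw [← hP]
  have hkQ : (k:ℝ) * T ^ 2 ≤ (k:ℝ) * (N * Q) :=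
    mul_le_mul_of_nonneg_left hCS (Nat.cast_nonneg k)
  have hPeq : P = T * T - (k:ℝ) * Q := by linarith
  have hmeq : (m:ℝ) = N - (k:ℝ) := by linarith
  rw [hPeq, hmeq]
  nlinarith [mul_le_mul_of_nonneg_right hkQ hNpos.le]
end

section
/- Let V ≤ 𝔽₂^u be a subspace, v ∈ 𝔽₂^u \ V, W := span(V ∪ {v}), S ⊆ 𝔽₂^u, b ≥ 0, and Φ(U) := E_{x uniform}[b^{|(x+U)∩S|}] for subspaces U. Then Φ(W) - 1 ≥ 2(Φ(V) - 1). -/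
/-! Since `v ∉ V`, every coset `x + W` of `W = span (V ∪ {v})` is the disjoint union of the cosets
`x + V` and `x + v + V`, so the exponent at `x` is `f x + f (x + v)` with `f x = |(x + V) ∩ S|`.
Pointwise `b ^ (r + s) + 1 ≥ b ^ r + b ^ s`; averaging over `x`, and using that `x ↦ x + v`
preserves the uniform distribution, gives `Φ(W) + 1 ≥ 2 Φ(V)`. -/

section Coset

variable {M : Type*} [AddCommGroup M] [Module (ZMod 2) M] {V : Submodule (ZMod 2) M} {v : M}

theorem Submodule.mem_span_union_singleton_iff {w : M} :
    w ∈ Submodule.span (ZMod 2) ((V : Set M) ∪ {v}) ↔ w ∈ V ∨ w - v ∈ V := by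
  rw [Submodule.span_union, Submodule.span_eq, Submodule.mem_sup]
  constructor
  · rintro ⟨y, hy, z, hz, rfl⟩
    obtain ⟨c, rfl⟩ := Submodule.mem_span_singleton.mp hz
    rcases (by decide : ∀ c : ZMod 2, c = 0 ∨ c = 1) c with rfl | rfl
    · left; simpa using hy
    · right; simpa using hy
  · rintro (h | h)
    · exact ⟨w, h, 0, Submodule.zero_mem _, add_zero w⟩
    · exact ⟨w - v, h, v, Submodule.mem_span_singleton_self v, sub_add_cancel w v⟩

theorem ncard_inter_coset_span_union_singleton (hv : v ∉ V) {S : Set M} (hS : S.Finite) (x : M) :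
    ({z | z - x ∈ Submodule.span (ZMod 2) ((V : Set M) ∪ {v})} ∩ S).ncard =
      ({z | z - x ∈ V} ∩ S).ncard + ({z | z - (x + v) ∈ V} ∩ S).ncard := by
  have hsplit : {z | z - x ∈ Submodule.span (ZMod 2) ((V : Set M) ∪ {v})} ∩ S =
      ({z | z - x ∈ V} ∩ S) ∪ ({z | z - (x + v) ∈ V} ∩ S) := by
    ext z
    simp only [Set.mem_inter_iff, Set.mem_union, Set.mem_ofPred_eq,
      Submodule.mem_span_union_singleton_iff, sub_add_eq_sub_sub]
    tauto
  rw [hsplit]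
  refine Set.ncard_union_eq ?_ (hS.subset Set.inter_subset_right) (hS.subset Set.inter_subset_right)
  rw [Set.disjoint_left]
  rintro z ⟨h₁, -⟩ ⟨h₂, -⟩
  have hdiff : (z - x) - (z - (x + v)) = v := by abel
  exact hv (hdiff ▸ V.sub_mem h₁ h₂)

end Coset

section Averaging

variable {R : Type*} [CommRing R] [LinearOrder R] [IsStrictOrderedRing R] {b : R}

/-- The key algebraic step: `(b ^ r - 1) * (b ^ s - 1) ≥ 0`, since both factors have the sign
of `b - 1`. -/
theorem pow_add_pow_le_pow_add_add_one (hb : 0 ≤ b) (r s : ℕ) :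
    b ^ r + b ^ s ≤ b ^ (r + s) + 1 := by
  have hprod : 0 ≤ (b ^ r - 1) * (b ^ s - 1) := by
    rcases le_total b 1 with h | h
    · exact mul_nonneg_of_nonpos_of_nonpos (sub_nonpos.mpr (pow_le_one₀ hb h))
        (sub_nonpos.mpr (pow_le_one₀ hb h))
    · exact mul_nonneg (sub_nonneg.mpr (one_le_pow₀ h)) (sub_nonneg.mpr (one_le_pow₀ h))
  rw [pow_add]
  linarith

theorem two_mul_sum_pow_le_sum_pow_add_add_card {G : Type*} [AddGroup G] [Fintype G]
    (hb : 0 ≤ b) (f : G → ℕ) (v : G) :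
    2 * ∑ x, b ^ f x ≤ ∑ x, b ^ (f x + f (x + v)) + Fintype.card G := by
  have hshift : ∑ x, b ^ f (x + v) = ∑ x, b ^ f x := Equiv.sum_comp (Equiv.addRight v) (b ^ f ·)
  calc 2 * ∑ x, b ^ f x = ∑ x, (b ^ f x + b ^ f (x + v)) := by
        rw [Finset.sum_add_distrib, hshift, two_mul]
    _ ≤ ∑ x, (b ^ (f x + f (x + v)) + 1) :=
        Finset.sum_le_sum fun x _ => pow_add_pow_le_pow_add_add_one hb _ _
    _ = ∑ x, b ^ (f x + f (x + v)) + Fintype.card G := by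
        simp [Finset.sum_add_distrib]

end Averaging

theorem stmt_5 (u : ℕ) (V : Submodule (ZMod 2) (Fin u → ZMod 2))
    (v : Fin u → ZMod 2) (hv : v ∉ V)
    (S : Set (Fin u → ZMod 2)) (b : ℝ) (hb : 0 ≤ b) :
    2 * (potential u S b V - 1) ≤
      potential u S b (Submodule.span (ZMod 2) ((V : Set (Fin u → ZMod 2)) ∪ {v})) - 1 := by
  have hcard : (Fintype.card (Fin u → ZMod 2) : ℝ) = 2 ^ u := by simp
  have hsum := two_mul_sum_pow_le_sum_pow_add_add_card hb
    (fun x => ({z | z - x ∈ V} ∩ S).ncard) v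
  rw [hcard] at hsum
  have hpos : (0 : ℝ) < 2 ^ u := by positivity
  simp only [potential, ncard_inter_coset_span_union_singleton hv S.toFinite]
  rw [div_sub_one hpos.ne', div_sub_one hpos.ne', ← mul_div_assoc]
  exact div_le_div_of_nonneg_right (by linarith) hpos.le
end

section
/- Let δ ≥ 0 and t > 1 + 2δ be reals, and define β₁(t, δ) := (t² - (1+2δ)²)/(t² - (1+4δ)). Then for all x ≥ 1 + 2δ, max(0, (t² - x²)/(t² - 1 - 4δ)) ≥ ((t - x)/(t - 1 - 2δ)) · β₁(t, δ). -/
theorem stmt_9 (δ t x : ℝ) (hδ : 0 ≤ δ) (ht : 1 + 2 * δ < t) (hx : 1 + 2 * δ ≤ x) :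
    ((t - x) / (t - 1 - 2 * δ)) * ((t ^ 2 - (1 + 2 * δ) ^ 2) / (t ^ 2 - (1 + 4 * δ)))
      ≤ max 0 ((t ^ 2 - x ^ 2) / (t ^ 2 - 1 - 4 * δ)) := by
  have h1 : 0 < t - 1 - 2 * δ := by linarith
  have h2 : 0 < t ^ 2 - 1 - 4 * δ := by nlinarith
  have h2' : 0 < t ^ 2 - (1 + 4 * δ) := by linarith
  rcases le_or_gt t x with h | h
  · have hL : (t - x) / (t - 1 - 2 * δ) * ((t ^ 2 - (1 + 2 * δ) ^ 2) / (t ^ 2 - (1 + 4 * δ))) ≤ 0 := by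
      apply mul_nonpos_of_nonpos_of_nonneg
      · apply div_nonpos_of_nonpos_of_nonneg <;> linarith
      · apply div_nonneg <;> nlinarith
    exact hL.trans (le_max_left _ _)
  · rw [max_eq_right (div_nonneg (by nlinarith) h2.le)]
    rw [div_mul_div_comm, div_le_div_iff₀ (by positivity) h2]
    nlinarith [mul_nonneg (sub_nonneg.2 h.le) (sub_nonneg.2 hx), mul_pos h1 h2,
      mul_nonneg (mul_nonneg (sub_nonneg.2 h.le) (sub_nonneg.2 hx)) h2.le]
end

section
/- For any real t with 1 < t ≤ 2, the sum Σ_{i=0}^{∞} 4^i/(t^{2^i} - 1) is at most 24/(t-1)². -/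
/-!
Write `ε = t - 1` and choose `n` with `5 / 2 < x ≤ 5`, where `x = 2 ^ n * ε`. Bernoulli's
inequality `t ^ 2 ^ i - 1 ≥ 2 ^ i * ε` bounds the terms with `i ≤ n` by `2 ^ i / ε`, which sum to
at most `2 ^ (n + 1) / ε = 2 x / ε ^ 2`. Beyond `n` the base `b = t ^ 2 ^ (n + 1)` is at least
`(1 + x) ^ 2 ≥ 49 / 4`, and since `b ^ 2 ^ k ≥ b ^ (k + 1)` the remaining terms are dominated by a
geometric series of ratio `16 / 49`, of sum `(784 / 1485) x ^ 2 / ε ^ 2`. Finally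
`2 x + (784 / 1485) x ^ 2 ≤ 24` for `x ≤ 5`.
-/

open Finset

lemma one_add_mul_sub_one_le_pow {t : ℝ} (ht : -1 ≤ t) (n : ℕ) : 1 + n * (t - 1) ≤ t ^ n := by
  simpa using one_add_mul_le_pow (a := t - 1) (by linarith) n

lemma four_pow_div_pow_two_pow_sub_one_le {t : ℝ} (ht : 1 < t) (i : ℕ) :
    (4 : ℝ) ^ i / (t ^ 2 ^ i - 1) ≤ 2 ^ i / (t - 1) := by
  have hε : 0 < t - 1 := sub_pos.2 ht
  have hbernoulli : 2 ^ i * (t - 1) ≤ t ^ 2 ^ i - 1 := by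
    have := one_add_mul_sub_one_le_pow (by linarith : -1 ≤ t) (2 ^ i)
    push_cast at this
    linarith
  calc (4 : ℝ) ^ i / (t ^ 2 ^ i - 1) ≤ 4 ^ i / (2 ^ i * (t - 1)) := by gcongr
    _ = 2 ^ i / (t - 1) := by
      rw [show (4 : ℝ) ^ i = 2 ^ i * 2 ^ i by rw [← mul_pow]; norm_num,
        mul_div_mul_left _ _ (by positivity)]

lemma sum_range_four_pow_div_pow_two_pow_sub_one_le {t : ℝ} (ht : 1 < t) (N : ℕ) :
    ∑ i ∈ range N, (4 : ℝ) ^ i / (t ^ 2 ^ i - 1) ≤ 2 ^ N / (t - 1) := by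
  have hε : 0 < t - 1 := sub_pos.2 ht
  calc ∑ i ∈ range N, (4 : ℝ) ^ i / (t ^ 2 ^ i - 1)
      ≤ ∑ i ∈ range N, (2 : ℝ) ^ i / (t - 1) :=
        sum_le_sum fun i _ => four_pow_div_pow_two_pow_sub_one_le ht i
    _ = (2 ^ N - 1) / (t - 1) := by rw [← sum_div, geom_sum_eq (by norm_num)]; norm_num
    _ ≤ 2 ^ N / (t - 1) := by gcongr; linarith

lemma sub_one_mul_pow_le_pow_two_pow_sub_one {b c : ℝ} (hc : 1 ≤ c) (hcb : c ≤ b) (k : ℕ) :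
    (c - 1) * c ^ k ≤ b ^ 2 ^ k - 1 := by
  have hck : 1 ≤ c ^ k := one_le_pow₀ hc
  calc (c - 1) * c ^ k ≤ c ^ (k + 1) - 1 := by rw [pow_succ]; nlinarith
    _ ≤ b ^ (k + 1) - 1 := by gcongr
    _ ≤ b ^ 2 ^ k - 1 := by gcongr; exacts [hc.trans hcb, Nat.lt_two_pow_self]

section Tail

variable {t : ℝ} {n : ℕ} (hb : 49 / 4 ≤ t ^ 2 ^ n)
include hb

lemma le_pow_two_pow_add_sub_one (k : ℕ) : 45 / 4 * (49 / 4) ^ k ≤ t ^ 2 ^ (k + n) - 1 := by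
  have := sub_one_mul_pow_le_pow_two_pow_sub_one (by norm_num) hb k
  rw [← pow_mul, ← pow_add, add_comm] at this
  linarith

lemma four_pow_add_div_pow_two_pow_sub_one_le (k : ℕ) :
    (4 : ℝ) ^ (k + n) / (t ^ 2 ^ (k + n) - 1) ≤ 4 ^ n * (4 / 45) * (16 / 49) ^ k := by
  have hden := le_pow_two_pow_add_sub_one hb k
  have hgeom : (16 / 49 : ℝ) ^ k * (49 / 4) ^ k = 4 ^ k := by rw [← mul_pow]; norm_num
  rw [div_le_iff₀ (lt_of_lt_of_le (by positivity) hden)]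
  calc (4 : ℝ) ^ (k + n) = 4 ^ n * (4 / 45) * (16 / 49) ^ k * (45 / 4 * (49 / 4) ^ k) := by
        rw [pow_add]; linear_combination -(4 : ℝ) ^ n * hgeom
    _ ≤ 4 ^ n * (4 / 45) * (16 / 49) ^ k * (t ^ 2 ^ (k + n) - 1) := by gcongr

lemma summable_four_pow_add_div_pow_two_pow_sub_one :
    Summable fun k : ℕ => (4 : ℝ) ^ (k + n) / (t ^ 2 ^ (k + n) - 1) :=
  ((summable_geometric_of_lt_one (by norm_num) (by norm_num)).mul_left _).of_nonneg_of_le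
    (fun k => div_nonneg (by positivity)
      (le_trans (by positivity) (le_pow_two_pow_add_sub_one hb k)))
    (four_pow_add_div_pow_two_pow_sub_one_le hb)

lemma tsum_four_pow_add_div_pow_two_pow_sub_one_le :
    ∑' k : ℕ, (4 : ℝ) ^ (k + n) / (t ^ 2 ^ (k + n) - 1) ≤ 4 ^ n * (196 / 1485) := by
  have hgeom := summable_geometric_of_lt_one (r := (16 / 49 : ℝ)) (by norm_num) (by norm_num)
  calc ∑' k : ℕ, (4 : ℝ) ^ (k + n) / (t ^ 2 ^ (k + n) - 1)
      ≤ ∑' k : ℕ, (4 : ℝ) ^ n * (4 / 45) * (16 / 49) ^ k :=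
        (summable_four_pow_add_div_pow_two_pow_sub_one hb).tsum_le_tsum
          (four_pow_add_div_pow_two_pow_sub_one_le hb) (hgeom.mul_left _)
    _ = 4 ^ n * (196 / 1485) := by
      rw [tsum_mul_left, tsum_geometric_of_lt_one (by norm_num) (by norm_num)]; ring

end Tail

theorem stmt_14 (t : ℝ) (ht1 : 1 < t) (ht2 : t ≤ 2) :
    ∑' i : ℕ, (4 : ℝ) ^ i / (t ^ 2 ^ i - 1) ≤ 24 / (t - 1) ^ 2 := by
  have hε : 0 < t - 1 := sub_pos.2 ht1
  obtain ⟨n, hn_le, hn_lt⟩ := exists_nat_pow_near (x := 5 / (t - 1))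
    (by rw [le_div_iff₀ hε]; linarith) one_lt_two
  set x := 2 ^ n * (t - 1) with hx
  have hx_le : x ≤ 5 := (le_div_iff₀ hε).1 hn_le
  have hx_ge : 5 / 2 ≤ x := by rw [div_lt_iff₀ hε, pow_succ] at hn_lt; linarith
  have hb : 49 / 4 ≤ t ^ 2 ^ (n + 1) := by
    have hbernoulli := one_add_mul_sub_one_le_pow (by linarith : -1 ≤ t) (2 ^ n)
    push_cast at hbernoulli
    calc (49 / 4 : ℝ) ≤ (1 + x) ^ 2 := by nlinarith
      _ ≤ (t ^ 2 ^ n) ^ 2 := by gcongr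
      _ = t ^ 2 ^ (n + 1) := by rw [← pow_mul, pow_succ]
  have h4 : (4 : ℝ) ^ n = (2 ^ n) ^ 2 := by rw [← pow_mul, mul_comm, pow_mul]; norm_num
  have hsum : Summable fun i : ℕ => (4 : ℝ) ^ i / (t ^ 2 ^ i - 1) :=
    (summable_nat_add_iff (n + 1)).1 (summable_four_pow_add_div_pow_two_pow_sub_one hb)
  rw [← hsum.sum_add_tsum_nat_add (n + 1)]
  calc _ ≤ 2 ^ (n + 1) / (t - 1) + 4 ^ (n + 1) * (196 / 1485) :=
        add_le_add (sum_range_four_pow_div_pow_two_pow_sub_one_le ht1 _)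
          (tsum_four_pow_add_div_pow_two_pow_sub_one_le hb)
    _ = (2 * x + x ^ 2 * (784 / 1485)) / (t - 1) ^ 2 := by
        rw [hx, pow_succ, pow_succ, h4]
        field_simp
        ring
    _ ≤ 24 / (t - 1) ^ 2 := by gcongr; nlinarith
end

section
/- Let h be a uniformly random linear map 𝔽₂^u → 𝔽₂^ℓ with u ≥ ℓ, and let K denote the dimension of the kernel of h. Then E[2^K] ≤ 2^{u-ℓ} + 1, and consequently Pr[h is not surjective] = Pr[K ≥ u - ℓ + 1] ≤ 2^{-(u-ℓ)}. -/
/-!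
Since `2 ^ K` is the number of vectors in the kernel, double counting pairs `(h, v)` with
`h v = 0` gives `E[2^K] = ∑_v Pr[h v = 0]`. For `v ≠ 0` the map `h ↦ h v` is a surjective
linear map onto `𝔽₂^ℓ`, so `Pr[h v = 0] = 2^{-ℓ}`, whence `E[2^K] = 1 + (2^u - 1) 2^{-ℓ}`.
By rank–nullity `K ≥ u - ℓ` always, with equality exactly when `h` is surjective; Markov's
inequality for `2^K - 2^{u-ℓ} ≥ 0` then bounds the probability of non-surjectivity.
-/

open Finset Module Matrix

theorem AddMonoidHom.card_ker_mul_card_of_surjective {G H : Type*} [AddGroup G] [AddGroup H]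
    (f : G →+ H) (hf : Function.Surjective f) : Nat.card f.ker * Nat.card H = Nat.card G := by
  rw [← f.ker.card_mul_index, AddSubgroup.index_ker, f.range_eq_top_of_surjective hf,
    AddSubgroup.card_top]

theorem LinearMap.surjective_iff_finrank_ker_add_finrank {K V W : Type*} [DivisionRing K]
    [AddCommGroup V] [Module K V] [AddCommGroup W] [Module K W] [FiniteDimensional K V]
    [FiniteDimensional K W] (f : V →ₗ[K] W) :
    Function.Surjective f ↔ finrank K (ker f) + finrank K W = finrank K V := by
  rw [← range_eq_top, Submodule.eq_top_iff_finrank_eq, ← f.finrank_range_add_finrank_ker]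
  omega

theorem LinearMap.finrank_sub_finrank_le_finrank_ker {K V W : Type*} [DivisionRing K]
    [AddCommGroup V] [Module K V] [AddCommGroup W] [Module K W] [FiniteDimensional K V]
    [FiniteDimensional K W] (f : V →ₗ[K] W) :
    finrank K V - finrank K W ≤ finrank K (ker f) := by
  have := Submodule.finrank_le (range f)
  have := f.finrank_range_add_finrank_ker
  omega

theorem Set.ncard_mul_le_sum {ι : Type*} [Fintype ι] (s : Set ι) (f : ι → ℝ) (c : ℝ)
    (hf : ∀ i, 0 ≤ f i) (hs : ∀ i ∈ s, c ≤ f i) : s.ncard * c ≤ ∑ i, f i := by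
  classical
  rw [Set.ncard_eq_toFinset_card', ← nsmul_eq_mul]
  calc s.toFinset.card • c ≤ ∑ i ∈ s.toFinset, f i :=
        card_nsmul_le_sum _ _ _ fun i hi => hs i (Set.mem_toFinset.mp hi)
    _ ≤ ∑ i, f i := sum_le_sum_of_subset_of_nonneg (Finset.subset_univ _) fun i _ _ => hf i

theorem sum_natCard_subtype_comm {α β : Type*} [Fintype α] [Fintype β] (r : α → β → Prop) :
    ∑ a, Nat.card {b // r a b} = ∑ b, Nat.card {a // r a b} := by
  classical
  simp only [Nat.card_eq_fintype_card, Fintype.card_subtype, card_filter]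
  exact sum_comm

namespace Matrix

variable {K m n : Type*} [Fintype n]

theorem mulVec_addMonoidHomLeft_surjective [DivisionRing K] {v : n → K} (hv : v ≠ 0) :
    Function.Surjective (mulVec.addMonoidHomLeft (m := m) v) := by
  classical
  obtain ⟨i, hi⟩ := Function.ne_iff.mp hv
  refine fun w => ⟨vecMulVec w (Pi.single i (v i)⁻¹), ?_⟩
  simp [mulVec.addMonoidHomLeft, vecMulVec_mulVec, single_dotProduct, inv_mul_cancel₀ hi]

theorem natCard_mulVec_eq_zero_mul_natCard [DivisionRing K] {v : n → K} (hv : v ≠ 0) :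
    Nat.card {M : Matrix m n K // M *ᵥ v = 0} * Nat.card (m → K) = Nat.card (Matrix m n K) :=
  (mulVec.addMonoidHomLeft v).card_ker_mul_card_of_surjective
    (mulVec_addMonoidHomLeft_surjective hv)

theorem sum_natCard_ker_mulVecLin [Field K] [Fintype K] [Fintype m] [DecidableEq m]
    [DecidableEq n] :
    (∑ M : Matrix m n K, Nat.card (LinearMap.ker M.mulVecLin)) * Nat.card (m → K)
        + Nat.card (Matrix m n K)
      = Nat.card (Matrix m n K) * (Nat.card (m → K) + Nat.card (n → K)) := by
  classical
  have hker (M : Matrix m n K) :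
      Nat.card (LinearMap.ker M.mulVecLin) = Nat.card {v // M *ᵥ v = 0} := rfl
  have hzero : Nat.card {M : Matrix m n K // M *ᵥ 0 = 0} = Nat.card (Matrix m n K) := by
    simp
  simp only [hker, sum_natCard_subtype_comm fun (M : Matrix m n K) v => M *ᵥ v = 0]
  rw [← add_sum_erase _ _ (mem_univ 0), hzero, add_mul, sum_mul,
    sum_congr rfl fun v hv => natCard_mulVec_eq_zero_mul_natCard (ne_of_mem_erase hv), sum_const,
    card_erase_of_mem (mem_univ 0), card_univ, smul_eq_mul,
    Nat.card_eq_fintype_card (α := n → K)]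
  have : 1 ≤ Fintype.card (n → K) := Fintype.card_pos
  zify [this]
  ring

theorem sum_card_pow_finrank_ker_mulVecLin_le [Field K] [Fintype K] [Fintype m] [DecidableEq m]
    [DecidableEq n] :
    ∑ M : Matrix m n K, (Nat.card K : ℝ) ^ finrank K (LinearMap.ker M.mulVecLin)
      ≤ ((Nat.card K : ℝ) ^ (Fintype.card n - Fintype.card m) + 1) * Nat.card (Matrix m n K) := by
  have hcount := congrArg (Nat.cast : ℕ → ℝ) (sum_natCard_ker_mulVecLin (K := K) (m := m) (n := n))
  simp only [Nat.card_fun, Nat.card_eq_fintype_card (α := m), Nat.card_eq_fintype_card (α := n),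
    fun M : Matrix m n K => natCard_eq_pow_finrank (K := K) (V := LinearMap.ker M.mulVecLin)]
    at hcount
  push_cast at hcount
  have hq : (1 : ℝ) ≤ Nat.card K := by exact_mod_cast Nat.card_pos
  have hexp : (Nat.card K : ℝ) ^ Fintype.card n
      ≤ (Nat.card K : ℝ) ^ (Fintype.card n - Fintype.card m)
        * (Nat.card K : ℝ) ^ Fintype.card m := by
    rw [← pow_add]
    exact pow_le_pow_right₀ hq (by omega)
  refine le_of_mul_le_mul_right ?_ (by positivity : (0 : ℝ) < (Nat.card K : ℝ) ^ Fintype.card m)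
  nlinarith [(Nat.cast_nonneg _ : (0 : ℝ) ≤ Nat.card (Matrix m n K))]

theorem card_sub_card_le_finrank_ker_mulVecLin [Field K] [Fintype m] (M : Matrix m n K) :
    Fintype.card n - Fintype.card m ≤ finrank K (LinearMap.ker M.mulVecLin) := by
  simpa using M.mulVecLin.finrank_sub_finrank_le_finrank_ker

theorem not_surjective_mulVec_iff [Field K] [Fintype m] (M : Matrix m n K)
    (h : Fintype.card m ≤ Fintype.card n) :
    ¬Function.Surjective M.mulVec
      ↔ Fintype.card n - Fintype.card m + 1 ≤ finrank K (LinearMap.ker M.mulVecLin) := by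
  rw [← coe_mulVecLin, M.mulVecLin.surjective_iff_finrank_ker_add_finrank]
  simp only [finrank_fintype_fun_eq_card]
  have := M.card_sub_card_le_finrank_ker_mulVecLin
  omega

end Matrix

theorem stmt_19 (u ℓ : ℕ) (hu : ℓ ≤ u) :
    ((∑ M : Matrix (Fin ℓ) (Fin u) (ZMod 2),
        (2 : ℝ) ^ Module.finrank (ZMod 2) (LinearMap.ker M.mulVecLin))
      / (Fintype.card (Matrix (Fin ℓ) (Fin u) (ZMod 2)) : ℝ) ≤ 2 ^ (u - ℓ) + 1) ∧
    ({M : Matrix (Fin ℓ) (Fin u) (ZMod 2) | ¬ Function.Surjective M.mulVec}.ncard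
      = {M : Matrix (Fin ℓ) (Fin u) (ZMod 2) |
          u - ℓ + 1 ≤ Module.finrank (ZMod 2) (LinearMap.ker M.mulVecLin)}.ncard) ∧
    (({M : Matrix (Fin ℓ) (Fin u) (ZMod 2) | ¬ Function.Surjective M.mulVec}.ncard : ℝ)
      / (Fintype.card (Matrix (Fin ℓ) (Fin u) (ZMod 2)) : ℝ) ≤ 1 / 2 ^ (u - ℓ)) := by
  have hN : (0 : ℝ) < Fintype.card (Matrix (Fin ℓ) (Fin u) (ZMod 2)) := by
    exact_mod_cast Fintype.card_pos
  have hmean : ∑ M : Matrix (Fin ℓ) (Fin u) (ZMod 2),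
      (2 : ℝ) ^ finrank (ZMod 2) (LinearMap.ker M.mulVecLin)
      ≤ (2 ^ (u - ℓ) + 1) * Fintype.card (Matrix (Fin ℓ) (Fin u) (ZMod 2)) := by
    simpa [Nat.card_eq_fintype_card] using
      Matrix.sum_card_pow_finrank_ker_mulVecLin_le (K := ZMod 2) (m := Fin ℓ) (n := Fin u)
  have hker_ge (M : Matrix (Fin ℓ) (Fin u) (ZMod 2)) :
      u - ℓ ≤ finrank (ZMod 2) (LinearMap.ker M.mulVecLin) := by
    simpa using M.card_sub_card_le_finrank_ker_mulVecLin
  have hbad (M : Matrix (Fin ℓ) (Fin u) (ZMod 2)) :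
      ¬Function.Surjective M.mulVec
        ↔ u - ℓ + 1 ≤ finrank (ZMod 2) (LinearMap.ker M.mulVecLin) := by
    simpa using M.not_surjective_mulVec_iff (by simpa using hu)
  refine ⟨(div_le_iff₀ hN).2 hmean, by simp_rw [hbad], ?_⟩
  have hmarkov := Set.ncard_mul_le_sum
    {M : Matrix (Fin ℓ) (Fin u) (ZMod 2) | ¬Function.Surjective M.mulVec}
    (fun M => (2 : ℝ) ^ finrank (ZMod 2) (LinearMap.ker M.mulVecLin) - 2 ^ (u - ℓ)) (2 ^ (u - ℓ))
    (fun M => sub_nonneg.2 (pow_le_pow_right₀ one_le_two (hker_ge M)))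
    (fun M hM => by
      have := pow_le_pow_right₀ (one_le_two (α := ℝ)) ((hbad M).1 hM)
      rw [pow_succ] at this
      linarith)
  rw [sum_sub_distrib, sum_const, card_univ, nsmul_eq_mul] at hmarkov
  rw [div_le_div_iff₀ hN (by positivity)]
  linarith
end
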